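/- For every nonzero vector a ∈ ℝ^N and every integer M ≥ 1, with L = N+M−1, the largest eigenvalue of the M×M autocorrelation Toeplitz matrix P(a) satisfies max_i λ_i(P(a)) ≤ max_{1 ≤ i ≤ L} | Σ_{k=1}^N a_k e^{−2πj(i−1)(k−1)/L} |²; equivalently, ρ(a) ≤ ρ_c(a), where ρ_c(a) = ( max_{1 ≤ i ≤ L} | Σ_{k=1}^N a_k e^{−2πj(i−1)(k−1)/L} |² ) / ‖a‖₂² is the normalized maximum squared modulus of the eigenvalues of the L×L circulant matrix whose first column is a padded with M−1 zeros. -/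

import Mathlib

open Finset Complex

/-- Un-normalized sample autocorrelation `R_a(τ) = ∑_{i=1}^{N-τ} a_i a_{i+τ}`. -/
noncomputable def autocorr (N : ℕ) (a : Fin N → ℝ) (τ : ℕ) : ℝ :=
  ∑ i : Fin N, if h : i.1 + τ < N then a i * a ⟨i.1 + τ, h⟩ else 0

/-- The `M × M` symmetric Toeplitz covariance matrix `P(a)` with entries `R_a(|i-j|)`. -/
noncomputable def covToeplitz (N M : ℕ) (a : Fin N → ℝ) :
    Matrix (Fin M) (Fin M) ℝ :=
  fun i j => autocorr N a (Nat.dist i.1 j.1)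

/-- The `i`-th eigenvalue `∑_{k=1}^N a_k e^{-2πj(i-1)(k-1)/L}` (0-based indices here) of the
`L × L` circulant matrix whose first column is `a` padded with `M - 1` zeros. -/
noncomputable def circEig (N M : ℕ) (a : Fin N → ℝ) (i : Fin (N + M - 1)) : ℂ :=
  ∑ k : Fin N, (a k : ℂ) *
    Complex.exp (-(2 * Real.pi * Complex.I * (i.1 : ℂ) * (k.1 : ℂ)) / ((N + M - 1 : ℕ) : ℂ))


/-! For a primitive `L`-th root of unity `ω` with `L ≥ N + M - 1`, the products
`â(t) x̂(t)` of the `L`-point DFTs of the zero-padded `a` and `x` are the DFT of the linear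
convolution `a ∗ x`, which is too short to be aliased. Orthogonality of the characters
`t ↦ ω^(t k)` therefore gives `∑ₜ |â(t) x̂(t)|² = L · xᵀ P(a) x` and `∑ₜ |x̂(t)|² = L ‖x‖²`,
hence `xᵀ P(a) x ≤ (maxₜ |â(t)|²) ‖x‖²`, and the Rayleigh quotient bounds the top eigenvalue. -/

open ComplexConjugate Matrix

theorem IsPrimitiveRoot.sum_range_pow_mul_conj_pow {ω : ℂ} {L : ℕ} (hω : IsPrimitiveRoot ω L)
    {p q : ℕ} (hp : p < L) (hq : q < L) :
    ∑ t ∈ range L, ω ^ (t * p) * conj (ω ^ (t * q)) = if p = q then (L : ℂ) else 0 := by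
  have hω0 : ω ≠ 0 := hω.ne_zero (by omega)
  have hconj (n : ℕ) : conj (ω ^ n) = (ω ^ n)⁻¹ :=
    (Complex.inv_eq_conj (by rw [norm_pow, hω.norm'_eq_one (by omega), one_pow])).symm
  set ζ := ω ^ p * (ω ^ q)⁻¹
  have hterm (t : ℕ) : ω ^ (t * p) * conj (ω ^ (t * q)) = ζ ^ t := by
    rw [hconj, mul_comm t p, mul_comm t q, pow_mul, pow_mul, ← inv_pow, ← mul_pow]
  simp_rw [hterm]
  split_ifs with hpq
  · simp [ζ, hpq, hω0]
  · have hζ1 : ζ ≠ 1 := fun h => hpq (hω.pow_inj hp hq (mul_inv_eq_one₀ (by simp [hω0]) |>.mp h))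
    have hζL : ζ ^ L = 1 := by
      rw [mul_pow, inv_pow, ← pow_mul, ← pow_mul, mul_comm p, mul_comm q, pow_mul, pow_mul,
        hω.pow_eq_one, one_pow, one_pow, inv_one, mul_one]
    rw [geom_sum_eq hζ1, hζL, sub_self, zero_div]

theorem IsPrimitiveRoot.sum_norm_sq_sum_mul_pow {ι : Type*} [Fintype ι] {ω : ℂ} {L : ℕ}
    (hω : IsPrimitiveRoot ω L) (c : ι → ℝ) (e : ι → ℕ) (he : ∀ i, e i < L) :
    ∑ t : Fin L, ‖∑ i, (c i : ℂ) * ω ^ (t * e i)‖ ^ 2 =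
      L * ∑ i, ∑ j, if e i = e j then c i * c j else 0 := by
  apply Complex.ofReal_injective
  push_cast
  simp_rw [← Complex.mul_conj', map_sum, Finset.sum_mul_sum, map_mul, Complex.conj_ofReal]
  rw [Fin.sum_univ_eq_sum_range
    (fun t => ∑ i, ∑ j, (c i : ℂ) * ω ^ (t * e i) * (c j * conj (ω ^ (t * e j)))),
    Finset.sum_comm, Finset.mul_sum]
  refine Finset.sum_congr rfl fun i _ => ?_
  rw [Finset.sum_comm, Finset.mul_sum]
  refine Finset.sum_congr rfl fun j _ => ?_
  have hsplit (t : ℕ) : (c i : ℂ) * ω ^ (t * e i) * (c j * conj (ω ^ (t * e j))) =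
      (c i * c j) * (ω ^ (t * e i) * conj (ω ^ (t * e j))) := by ring
  simp_rw [hsplit, ← Finset.mul_sum, hω.sum_range_pow_mul_conj_pow (he i) (he j)]
  split_ifs <;> push_cast <;> ring

theorem Matrix.IsHermitian.eigenvalues_le_of_re_dotProduct_mulVec_le {𝕜 n : Type*} [RCLike 𝕜]
    [Fintype n] [DecidableEq n] {A : Matrix n n 𝕜} (hA : A.IsHermitian) {C : ℝ}
    (h : ∀ x : n → 𝕜, RCLike.re (star x ⬝ᵥ A *ᵥ x) ≤ C * RCLike.re (star x ⬝ᵥ x)) (i : n) :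
    hA.eigenvalues i ≤ C := by
  rw [hA.eigenvalues_eq]
  refine (h _).trans_eq ?_
  rw [dotProduct_comm, ← EuclideanSpace.inner_eq_star_dotProduct, inner_self_eq_norm_sq_to_K,
    hA.eigenvectorBasis.orthonormal.1 i]
  simp

theorem Fin.sum_ite_val_eq {R : Type*} [AddCommMonoid R] {N : ℕ} (n : ℕ) (f : Fin N → R) :
    ∑ k : Fin N, (if (k : ℕ) = n then f k else 0) = if h : n < N then f ⟨n, h⟩ else 0 := by
  split_ifs with h
  · rw [Finset.sum_eq_single ⟨n, h⟩ (fun k _ hk => if_neg fun hkn => hk (Fin.ext hkn)) (by simp)]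
    exact if_pos rfl
  · exact Finset.sum_eq_zero fun k _ => if_neg (by omega)

theorem autocorr_dist_eq_sum (N : ℕ) (a : Fin N → ℝ) (m m' : ℕ) :
    autocorr N a (Nat.dist m m') =
      ∑ k : Fin N, ∑ k' : Fin N, if (k : ℕ) + m = k' + m' then a k * a k' else 0 := by
  wlog h : m' ≤ m generalizing m m'
  · rw [Nat.dist_comm, this m' m (by omega), Finset.sum_comm]
    exact Finset.sum_congr rfl fun _ _ => Finset.sum_congr rfl fun _ _ =>
      if_congr eq_comm (mul_comm _ _) rfl
  rw [Nat.dist_eq_sub_of_le_right h, autocorr]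
  refine Finset.sum_congr rfl fun k _ => ?_
  have hiff (k' : Fin N) : (k : ℕ) + m = k' + m' ↔ (k' : ℕ) = k + (m - m') := by omega
  simp_rw [hiff, Fin.sum_ite_val_eq]

theorem dotProduct_covToeplitz_mulVec (N M : ℕ) (a : Fin N → ℝ) (x : Fin M → ℝ) :
    x ⬝ᵥ covToeplitz N M a *ᵥ x = ∑ p : Fin N × Fin M, ∑ q : Fin N × Fin M,
      if (p.1 : ℕ) + p.2 = q.1 + q.2 then a p.1 * x p.2 * (a q.1 * x q.2) else 0 := by
  simp only [dotProduct, mulVec, covToeplitz, autocorr_dist_eq_sum, Fintype.sum_prod_type,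
    Finset.mul_sum, Finset.sum_mul]
  simp_rw [Finset.sum_comm (s := (univ : Finset (Fin M))) (t := (univ : Finset (Fin N)))]
  refine Finset.sum_congr rfl fun k _ => Finset.sum_congr rfl fun m _ =>
    Finset.sum_congr rfl fun k' _ => Finset.sum_congr rfl fun m' _ => ?_
  split_ifs <;> ring

/-- For `ω` a primitive `L`-th root of unity and `K ≤ L`, this is the `L`-point DFT of `y`
padded with zeros. -/
noncomputable def dft (ω : ℂ) {K : ℕ} (y : Fin K → ℝ) (t : ℕ) : ℂ :=
  ∑ k, (y k : ℂ) * ω ^ (t * k)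

theorem circEig_eq_dft (N M : ℕ) (a : Fin N → ℝ) (i : Fin (N + M - 1)) :
    circEig N M a i = dft (exp (2 * Real.pi * I / (N + M - 1 : ℕ)))⁻¹ a i := by
  refine Finset.sum_congr rfl fun k _ => ?_
  rw [← Complex.exp_neg, ← Complex.exp_nat_mul]
  congr 2
  push_cast
  ring

theorem dft_mul_dft (ω : ℂ) {N M : ℕ} (a : Fin N → ℝ) (x : Fin M → ℝ) (t : ℕ) :
    dft ω a t * dft ω x t =
      ∑ p : Fin N × Fin M, ((a p.1 * x p.2 : ℝ) : ℂ) * ω ^ (t * ((p.1 : ℕ) + p.2)) := by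
  rw [dft, dft, Finset.sum_mul_sum, ← Fintype.sum_prod_type']
  refine Finset.sum_congr rfl fun p _ => ?_
  push_cast
  ring

theorem IsPrimitiveRoot.sum_norm_sq_dft {ω : ℂ} {L K : ℕ} (hω : IsPrimitiveRoot ω L)
    (hK : K ≤ L) (y : Fin K → ℝ) :
    ∑ t : Fin L, ‖dft ω y t‖ ^ 2 = L * ∑ k, y k ^ 2 := by
  simp only [dft]
  rw [hω.sum_norm_sq_sum_mul_pow y (↑) fun k => k.2.trans_le hK]
  simp [Fin.val_inj, sq]

theorem IsPrimitiveRoot.sum_norm_sq_dft_mul_dft {ω : ℂ} {L N M : ℕ} (hω : IsPrimitiveRoot ω L)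
    (hNM : N + M - 1 ≤ L) (a : Fin N → ℝ) (x : Fin M → ℝ) :
    ∑ t : Fin L, ‖dft ω a t * dft ω x t‖ ^ 2 = L * (x ⬝ᵥ covToeplitz N M a *ᵥ x) := by
  simp only [dft_mul_dft]
  rw [hω.sum_norm_sq_sum_mul_pow (fun p : Fin N × Fin M => a p.1 * x p.2)
    (fun p => (p.1 : ℕ) + p.2) fun p => by omega, dotProduct_covToeplitz_mulVec]

theorem IsPrimitiveRoot.dotProduct_covToeplitz_mulVec_le {ω : ℂ} {L N M : ℕ}
    (hω : IsPrimitiveRoot ω L) (hN : 0 < N) (hL : 0 < L) (hNM : N + M - 1 ≤ L)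
    {a : Fin N → ℝ} {C : ℝ} (hC : ∀ t : Fin L, ‖dft ω a t‖ ^ 2 ≤ C) (x : Fin M → ℝ) :
    x ⬝ᵥ covToeplitz N M a *ᵥ x ≤ C * (x ⬝ᵥ x) := by
  refine le_of_mul_le_mul_left ?_ (show (0 : ℝ) < L by positivity)
  calc (L : ℝ) * (x ⬝ᵥ covToeplitz N M a *ᵥ x)
      = ∑ t : Fin L, ‖dft ω a t‖ ^ 2 * ‖dft ω x t‖ ^ 2 := by
        simp only [← hω.sum_norm_sq_dft_mul_dft hNM, norm_mul, mul_pow]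
    _ ≤ ∑ t : Fin L, C * ‖dft ω x t‖ ^ 2 :=
        Finset.sum_le_sum fun t _ => by gcongr; exact hC t
    _ = L * (C * (x ⬝ᵥ x)) := by
        rw [← Finset.mul_sum, hω.sum_norm_sq_dft (by omega)]
        simp only [dotProduct, sq]
        ring

theorem rho_le_rho_circ_general (N M : ℕ) (hN : 1 ≤ N) (hM : 1 ≤ M)
    (a : Fin N → ℝ)
    (hP : (covToeplitz N M a).IsHermitian) :
    (⨆ i, hP.eigenvalues i) ≤ (⨆ i, ‖circEig N M a i‖ ^ 2) ∧
    (⨆ i, hP.eigenvalues i) / ∑ i, (a i) ^ 2 ≤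
      (⨆ i, ‖circEig N M a i‖ ^ 2) / ∑ i, (a i) ^ 2 := by
  have : Nonempty (Fin M) := ⟨⟨0, hM⟩⟩
  have hω := (Complex.isPrimitiveRoot_exp (N + M - 1) (by omega)).inv
  have hC (i : Fin (N + M - 1)) : ‖dft _ a i‖ ^ 2 ≤ ⨆ i, ‖circEig N M a i‖ ^ 2 :=
    circEig_eq_dft N M a i ▸
      le_ciSup (f := fun i => ‖circEig N M a i‖ ^ 2) (Set.finite_range _).bddAbove i
  have hmax : (⨆ i, hP.eigenvalues i) ≤ ⨆ i, ‖circEig N M a i‖ ^ 2 :=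
    ciSup_le <| hP.eigenvalues_le_of_re_dotProduct_mulVec_le fun x => by
      simpa using hω.dotProduct_covToeplitz_mulVec_le hN (by omega) le_rfl hC x
  exact ⟨hmax, div_le_div_of_nonneg_right hmax (Finset.sum_nonneg fun i _ => sq_nonneg _)⟩

theorem rho_le_rho_circ (N M : ℕ) (hN : 1 ≤ N) (hM : 1 ≤ M)
    (a : Fin N → ℝ) (ha : a ≠ 0)
    (hP : (covToeplitz N M a).IsHermitian) :
    (⨆ i, hP.eigenvalues i) ≤ (⨆ i, ‖circEig N M a i‖ ^ 2) ∧
    (⨆ i, hP.eigenvalues i) / ∑ i, (a i) ^ 2 ≤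
      (⨆ i, ‖circEig N M a i‖ ^ 2) / ∑ i, (a i) ^ 2 :=
  rho_le_rho_circ_general N M hN hM a hP
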